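/- Let A be a CEFA over Σ with k cost registers. Then the set {(w, (i, ℓ, n)) ∈ Σ* × ℤ^{2+k} : 0 ≤ i, 0 ≤ ℓ, i + ℓ ≤ |w|, and (w[i..i+ℓ−1], n) ∈ L(A)} is a cost-enriched regular language with k + 2 cost registers, where w[i..i+ℓ−1] denotes the factor of w of length ℓ starting at (0-based) position i (the empty word when ℓ = 0). Consequently, the cost-enriched pre-image of L(A) under the substring function (taking a string together with a start position and a length) is a cost-enriched recognisable relation, and a CEFA representation of it can be obtained whose size is linear in the size of A. -/

import Mathlib

/-!
A factor of `w` is read by guessing its two cut points: a three-phase automaton skips the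
prefix while counting its length `i`, simulates `A` on the factor while counting its length `ℓ`
next to `A`'s own costs, and then skips the suffix. It has `3 |Q|` states.
-/

/-- A cost-enriched finite automaton (CEFA) over alphabet `σ` with `k` cost registers:
states `Q`, a transition set `δ` of tuples `(q, a, q', η)` with update vector
`η : Fin k → ℤ`, initial states `I` and final states `F`. -/
structure CEFA (σ : Type) (k : ℕ) where
  Q : Type
  δ : Set (Q × σ × Q × (Fin k → ℤ))
  I : Set Q
  F : Set Q

namespace CEFA

variable {σ : Type} {k : ℕ}

/-- A CEFA is finite if its state set and its transition set are finite. -/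
def IsFinite (A : CEFA σ k) : Prop := Finite A.Q ∧ A.δ.Finite

/-- `Reach A q w n q'` holds if there is a sequence of transitions of `A` from `q` to `q'`
reading the word `w`, whose cost updates sum up to `n`. -/
inductive Reach (A : CEFA σ k) : A.Q → List σ → (Fin k → ℤ) → A.Q → Prop
  | nil (q : A.Q) : Reach A q [] 0 q
  | cons {q q' q'' : A.Q} {a : σ} {w : List σ} {η n : Fin k → ℤ} :
      (q, a, q', η) ∈ A.δ → Reach A q' w n q'' → Reach A q (a :: w) (η + n) q''

/-- The cost-enriched language of a CEFA: all pairs `(w, n)` admitting an accepting run. -/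
def Lang (A : CEFA σ k) : Set (List σ × (Fin k → ℤ)) :=
  {p | ∃ q₀ qf, q₀ ∈ A.I ∧ qf ∈ A.F ∧ Reach A q₀ p.1 p.2 qf}

end CEFA

/-- A cost-enriched regular language (CERL): a set accepted by some (finite) CEFA. -/
def IsCERL {σ : Type} {k : ℕ} (L : Set (List σ × (Fin k → ℤ))) : Prop :=
  ∃ A : CEFA σ k, A.IsFinite ∧ A.Lang = L

theorem Fin.append_add_append {M : Type*} [Add M] {m n : ℕ} (u u' : Fin m → M)
    (v v' : Fin n → M) :
    Fin.append u v + Fin.append u' v' = Fin.append (u + u') (v + v') := by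
  ext i
  induction i using Fin.addCases <;> simp

theorem List.exists_drop_take_iff {α : Type*} (w : List α) (P : ℕ → ℕ → List α → Prop) :
    (∃ i l, i + l ≤ w.length ∧ P i l ((w.drop i).take l)) ↔
      ∃ x u v, w = x ++ u ++ v ∧ P x.length u.length u := by
  constructor
  · rintro ⟨i, l, hle, hP⟩
    refine ⟨w.take i, (w.drop i).take l, (w.drop i).drop l, by simp, ?_⟩
    have hi : (w.take i).length = i := by simp; omega
    have hl : ((w.drop i).take l).length = l := by simp; omega
    rwa [hi, hl]
  · rintro ⟨x, u, v, rfl, hP⟩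
    exact ⟨x.length, u.length, by simp, by simpa⟩

namespace CEFA

variable {σ : Type} {k : ℕ}

theorem Reach.append {A : CEFA σ k} {q q' q'' : A.Q} {u v : List σ} {c d : Fin k → ℤ}
    (h₁ : A.Reach q u c q') (h₂ : A.Reach q' v d q'') : A.Reach q (u ++ v) (c + d) q'' := by
  induction h₁ with
  | nil => simpa using h₂
  | cons ht _ ih => simpa [add_assoc] using Reach.cons ht (ih h₂)

inductive SubstringPhase
  | pre | mid | post
deriving DecidableEq

open SubstringPhase

instance : Fintype SubstringPhase :=
  ⟨{pre, mid, post}, fun ph => by cases ph <;> simp⟩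

def substringCost (i l : ℤ) (n : Fin k → ℤ) : Fin (2 + k) → ℤ := Fin.append ![i, l] n

theorem substringCost_add (i l i' l' : ℤ) (n n' : Fin k → ℤ) :
    substringCost i l n + substringCost i' l' n' = substringCost (i + i') (l + l') (n + n') := by
  simp [substringCost, Fin.append_add_append]

theorem substringCost_zero : substringCost 0 0 (0 : Fin k → ℤ) = 0 := by
  ext i
  induction i using Fin.addCases with
  | left i => fin_cases i <;> rfl
  | right => simp [substringCost]

/- The `A`-component is carried through all three phases: it is a guessed initial state while
the prefix is skipped, follows `A` on the factor, and stays put on the suffix. Acceptance then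
only asks that it be final, which also covers the empty factor without ε-moves. -/
inductive SubstringStep (A : CEFA σ k) :
    SubstringPhase × A.Q → σ → SubstringPhase × A.Q → (Fin (2 + k) → ℤ) → Prop
  | skip (q : A.Q) (a : σ) : SubstringStep A (pre, q) a (pre, q) (substringCost 1 0 0)
  | read {ph : SubstringPhase} {q q' : A.Q} {a : σ} {η : Fin k → ℤ} :
      ph ≠ post → (q, a, q', η) ∈ A.δ → SubstringStep A (ph, q) a (mid, q') (substringCost 0 1 η)
  | leave (ph : SubstringPhase) (q : A.Q) (a : σ) : SubstringStep A (ph, q) a (post, q) 0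

def substringPreimage (A : CEFA σ k) : CEFA σ (2 + k) where
  Q := SubstringPhase × A.Q
  δ := {t | SubstringStep A t.1 t.2.1 t.2.2.1 t.2.2.2}
  I := {s | s.2 ∈ A.I}
  F := {s | s.2 ∈ A.F}

theorem substringPreimage_isFinite [Finite σ] {A : CEFA σ k} (hA : A.IsFinite) :
    (substringPreimage A).IsFinite := by
  obtain ⟨_, hδ⟩ := hA
  have : Finite (substringPreimage A).Q := inferInstanceAs (Finite (SubstringPhase × A.Q))
  refine ⟨this, ?_⟩
  let costs : Set (Fin (2 + k) → ℤ) :=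
    {substringCost 1 0 0, 0} ∪ (fun t => substringCost 0 1 t.2.2.2) '' A.δ
  have hcosts : costs.Finite := ((Set.finite_singleton 0).insert _).union (hδ.image _)
  refine (Set.finite_univ.prod (Set.finite_univ.prod (Set.finite_univ.prod hcosts))).subset ?_
  rintro ⟨s, a, s', η⟩ (h : SubstringStep A s a s' η)
  refine ⟨trivial, trivial, trivial, ?_⟩
  cases h with
  | skip => exact .inl (.inl rfl)
  | read _ ht => exact .inr ⟨_, ht, rfl⟩
  | leave => exact .inl (.inr rfl)

section

variable {A : CEFA σ k}

theorem mem_substringPreimage_δ {s s' : SubstringPhase × A.Q} {a : σ} {η : Fin (2 + k) → ℤ} :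
    (s, a, s', η) ∈ (substringPreimage A).δ ↔ SubstringStep A s a s' η :=
  Iff.rfl

theorem SubstringStep.reach_cons {s s' s'' : SubstringPhase × A.Q} {a : σ} {w : List σ}
    {η c : Fin (2 + k) → ℤ} (h : SubstringStep A s a s' η)
    (hr : (substringPreimage A).Reach s' w c s'') :
    (substringPreimage A).Reach s (a :: w) (η + c) s'' :=
  Reach.cons h hr

theorem reach_substringPreimage_skip (q : A.Q) (x : List σ) :
    (substringPreimage A).Reach (pre, q) x (substringCost x.length 0 0) (pre, q) := by
  induction x with
  | nil => simpa [substringCost_zero] using Reach.nil _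
  | cons a x ih =>
    convert (SubstringStep.skip q a).reach_cons ih using 1
    simp [substringCost_add, add_comm]

theorem reach_substringPreimage_post (q : A.Q) (v : List σ) :
    (substringPreimage A).Reach (post, q) v 0 (post, q) := by
  induction v with
  | nil => exact Reach.nil _
  | cons a v ih => simpa using (SubstringStep.leave post q a).reach_cons ih

theorem exists_reach_substringPreimage_zero (ph : SubstringPhase) (q : A.Q) (v : List σ) :
    ∃ ph', (substringPreimage A).Reach (ph, q) v 0 (ph', q) := by
  cases v with
  | nil => exact ⟨ph, Reach.nil _⟩
  | cons a v =>
    exact ⟨post, by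
      simpa using (SubstringStep.leave ph q a).reach_cons (reach_substringPreimage_post q v)⟩

theorem exists_reach_substringPreimage_of_reach {q q' : A.Q} {u : List σ} {n : Fin k → ℤ}
    (h : A.Reach q u n q') (ph : SubstringPhase) (hph : ph ≠ post) (v : List σ) :
    ∃ ph', (substringPreimage A).Reach (ph, q) (u ++ v) (substringCost 0 u.length n)
      (ph', q') := by
  induction h generalizing ph with
  | nil q => simpa [substringCost_zero] using exists_reach_substringPreimage_zero ph q v
  | cons ht _ ih =>
    obtain ⟨ph', h⟩ := ih mid (by decide)
    refine ⟨ph', ?_⟩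
    convert (SubstringStep.read hph ht).reach_cons h using 1
    simp [substringCost_add, add_comm]

theorem exists_append_of_reach_substringPreimage {s s' : (substringPreimage A).Q} {w : List σ}
    {c : Fin (2 + k) → ℤ} (h : (substringPreimage A).Reach s w c s') :
    ∃ x u v n, w = x ++ u ++ v ∧ c = substringCost x.length u.length n ∧
      A.Reach s.2 u n s'.2 ∧ (s.1 ≠ pre → x = []) ∧ (s.1 = post → u = []) := by
  induction h with
  | nil => exact ⟨[], [], [], 0, rfl, by simp [substringCost_zero], .nil _, fun _ => rfl,
      fun _ => rfl⟩
  | cons ht _ ih =>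
    obtain ⟨x, u, v, n, rfl, rfl, hu, hx, hu_post⟩ := ih
    cases mem_substringPreimage_δ.1 ht with
    | skip q a =>
      exact ⟨_ :: x, u, v, n, rfl, by simp [substringCost_add, add_comm], hu, by simp, by simp⟩
    | read hph hstep =>
      obtain rfl := hx (by simp)
      exact ⟨[], _ :: u, v, _, rfl, by simp [substringCost_add, add_comm], .cons hstep hu,
        fun _ => rfl, fun h => absurd h hph⟩
    | leave ph q a =>
      obtain rfl := hx (by simp)
      obtain rfl := hu_post rfl
      exact ⟨[], [], _ :: v, n, rfl, by simp, hu, fun _ => rfl, fun _ => rfl⟩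

theorem mem_lang_substringPreimage {w : List σ} {c : Fin (2 + k) → ℤ} :
    (w, c) ∈ (substringPreimage A).Lang ↔
      ∃ x u v, w = x ++ u ++ v ∧ ∃ n, c = substringCost x.length u.length n ∧ (u, n) ∈ A.Lang := by
  constructor
  · rintro ⟨s, s', hI, hF, h⟩
    obtain ⟨x, u, v, n, rfl, rfl, hu, -⟩ := exists_append_of_reach_substringPreimage h
    exact ⟨x, u, v, rfl, n, rfl, s.2, s'.2, hI, hF, hu⟩
  · rintro ⟨x, u, v, rfl, n, rfl, q, q', hI, hF, hu⟩
    dsimp only at hu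
    obtain ⟨ph', h⟩ := exists_reach_substringPreimage_of_reach hu pre (by decide) v
    refine ⟨(pre, q), (ph', q'), hI, hF, ?_⟩
    simpa [substringCost_add] using (reach_substringPreimage_skip q x).append h

end

end CEFA

/-- for a CEFA `A` with `k` registers, the set of pairs `(w, (i, ℓ, n))` with
`0 ≤ i`, `0 ≤ ℓ`, `i + ℓ ≤ |w|` and `(w[i..i+ℓ−1], n) ∈ L(A)` is a CERL with `2 + k`
registers; i.e. the cost-enriched pre-image of `L(A)` under the substring function is a
cost-enriched recognisable relation. -/
theorem substring_preimage_isCERL {σ : Type} [Fintype σ] {k : ℕ}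
    (A : CEFA σ k) (hA : A.IsFinite) :
    IsCERL {p : List σ × (Fin (2 + k) → ℤ) | ∃ (i l : ℕ) (n : Fin k → ℤ),
      p.2 = Fin.append ![(i : ℤ), (l : ℤ)] n ∧ i + l ≤ p.1.length ∧
      ((p.1.drop i).take l, n) ∈ A.Lang} := by
  refine ⟨A.substringPreimage, CEFA.substringPreimage_isFinite hA, ?_⟩
  ext ⟨w, c⟩
  rw [CEFA.mem_lang_substringPreimage, ← List.exists_drop_take_iff w
    fun i l u => ∃ n, c = CEFA.substringCost i l n ∧ (u, n) ∈ A.Lang]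
  constructor
  · rintro ⟨i, l, hle, n, hc, hL⟩
    exact ⟨i, l, n, hc, hle, hL⟩
  · rintro ⟨i, l, n, hc, hle, hL⟩
    exact ⟨i, l, hle, n, hc, hL⟩
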